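/- There exists a universal constant C > 0 such that for all 0 ≤ L ≤ U ≤ ∞ and w > 0, ∫_L^U φ(z) dz ≤ C·max{1, 1/w}·∫_L^{min(U, L+w)} φ(z) dz, where φ is the standard Gaussian density. -/

import Mathlib

/-!
For `a ≥ 0`, `φ (a + t) = φ a * exp (-(a * t) - t ^ 2 / 2)` is at most both
`φ a * exp (-t ^ 2 / 2)` and `φ a * exp (-(a * t))`; integrating over `t > 0` bounds the whole
tail beyond `a` by `(√(π / 2) + 1) * φ a / (1 + a)`. On the other hand, on `[a, a + δ]` with
`δ = min w (1 + a)⁻¹` the density stays above `φ a / e`, so the initial segment of length `w`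
carries mass at least `δ * φ a / e`, and `max 1 w⁻¹ * δ * (1 + a) ≥ 1`.
-/

open MeasureTheory Real

/-- Standard Gaussian density on `ℝ`. -/
noncomputable def stdGauss (z : ℝ) : ℝ := (Real.sqrt (2 * π))⁻¹ * Real.exp (-z ^ 2 / 2)

open Set

lemma stdGauss_pos (z : ℝ) : 0 < stdGauss z := by
  unfold stdGauss
  positivity

lemma integrable_stdGauss : Integrable stdGauss := by
  convert ProbabilityTheory.integrable_gaussianPDFReal 0 1 using 1
  ext z
  simp [stdGauss, ProbabilityTheory.gaussianPDFReal]

lemma setIntegral_stdGauss_mono {s t : Set ℝ} (hst : s ≤ᵐ[volume] t) :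
    ∫ z in s, stdGauss z ≤ ∫ z in t, stdGauss z :=
  setIntegral_mono_set integrable_stdGauss.integrableOn
    (ae_of_all _ fun z => (stdGauss_pos z).le) hst

lemma stdGauss_add (a t : ℝ) :
    stdGauss (a + t) = stdGauss a * exp (-(a * t) - t ^ 2 / 2) := by
  rw [stdGauss, stdGauss, mul_assoc, ← exp_add]
  ring_nf

lemma integral_Ioi_stdGauss_eq (a : ℝ) :
    ∫ z in Ioi a, stdGauss z = ∫ t in Ioi 0, stdGauss (a + t) := by
  simpa using ((measurePreserving_add_left volume a).setIntegral_preimage_emb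
    (measurableEmbedding_addLeft a) stdGauss (Ioi a)).symm

lemma integral_Ioi_stdGauss_le {a : ℝ} (ha : 0 ≤ a) :
    ∫ z in Ioi a, stdGauss z ≤ √(π / 2) * stdGauss a := by
  have hbound : ∀ t ∈ Ioi (0 : ℝ), stdGauss (a + t) ≤ stdGauss a * exp (-(1 / 2) * t ^ 2) := by
    intro t ht
    rw [stdGauss_add]
    exact mul_le_mul_of_nonneg_left (exp_le_exp.mpr (by nlinarith [ht.out])) (stdGauss_pos a).le
  have hgauss : ∫ t in Ioi (0 : ℝ), exp (-(1 / 2) * t ^ 2) = √(π / 2) := by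
    rw [integral_gaussian_Ioi, show π / (1 / 2) = 2 ^ 2 * (π / 2) by ring,
      sqrt_mul (by positivity), sqrt_sq (by norm_num)]
    ring
  calc ∫ z in Ioi a, stdGauss z
      ≤ ∫ t in Ioi (0 : ℝ), stdGauss a * exp (-(1 / 2) * t ^ 2) := by
        rw [integral_Ioi_stdGauss_eq]
        exact setIntegral_mono_on (integrable_stdGauss.comp_add_left a).integrableOn
          ((integrable_exp_neg_mul_sq (by norm_num)).integrableOn.const_mul _)
          measurableSet_Ioi hbound
    _ = √(π / 2) * stdGauss a := by rw [integral_const_mul, hgauss, mul_comm]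

lemma mul_integral_Ioi_stdGauss_le {a : ℝ} (ha : 0 ≤ a) :
    a * ∫ z in Ioi a, stdGauss z ≤ stdGauss a := by
  rcases ha.eq_or_lt with rfl | ha
  · simpa using (stdGauss_pos 0).le
  have hbound : ∀ t ∈ Ioi (0 : ℝ), stdGauss (a + t) ≤ stdGauss a * exp (-a * t) := by
    intro t ht
    rw [stdGauss_add]
    exact mul_le_mul_of_nonneg_left (exp_le_exp.mpr (by nlinarith [ht.out])) (stdGauss_pos a).le
  have hexp : ∫ t in Ioi (0 : ℝ), exp (-a * t) = a⁻¹ := by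
    rw [integral_exp_mul_Ioi (neg_lt_zero.mpr ha)]
    simp
  rw [mul_comm, ← le_div_iff₀ ha]
  calc ∫ z in Ioi a, stdGauss z
      ≤ ∫ t in Ioi (0 : ℝ), stdGauss a * exp (-a * t) := by
        rw [integral_Ioi_stdGauss_eq]
        exact setIntegral_mono_on (integrable_stdGauss.comp_add_left a).integrableOn
          ((integrableOn_exp_mul_Ioi (neg_lt_zero.mpr ha) 0).const_mul _)
          measurableSet_Ioi hbound
    _ = stdGauss a / a := by rw [integral_const_mul, hexp, div_eq_mul_inv]

lemma one_add_mul_integral_Ioi_stdGauss_le {a : ℝ} (ha : 0 ≤ a) :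
    (1 + a) * ∫ z in Ioi a, stdGauss z ≤ (√(π / 2) + 1) * stdGauss a := by
  linarith [integral_Ioi_stdGauss_le ha, mul_integral_Ioi_stdGauss_le ha]

lemma mul_stdGauss_le_integral_Icc {a δ : ℝ} (ha : 0 ≤ a) (hδ : 0 ≤ δ)
    (haδ : (1 + a) * δ ≤ 1) :
    δ * (exp (-1) * stdGauss a) ≤ ∫ z in Icc a (a + δ), stdGauss z := by
  have hbound : ∀ z ∈ Icc a (a + δ), exp (-1) * stdGauss a ≤ stdGauss z := by
    rintro z ⟨haz, hzδ⟩
    have hδ1 : δ ≤ 1 := by nlinarith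
    have hexponent : -1 ≤ -(a * (z - a)) - (z - a) ^ 2 / 2 := by
      nlinarith [mul_le_mul_of_nonneg_left (sub_le_iff_le_add'.2 hzδ) ha,
        mul_le_mul (sub_le_iff_le_add'.2 hzδ) (sub_le_iff_le_add'.2 hzδ) (sub_nonneg.2 haz) hδ]
    rw [← add_sub_cancel a z, stdGauss_add, mul_comm]
    exact mul_le_mul_of_nonneg_left (exp_le_exp.mpr hexponent) (stdGauss_pos a).le
  simpa [volume_real_Icc_of_le (le_add_of_nonneg_right hδ), mul_comm] using
    setIntegral_ge_of_const_le_real measurableSet_Icc measure_Icc_lt_top.ne hbound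
      integrable_stdGauss.integrableOn

lemma one_le_max_one_inv_mul_min {w a : ℝ} (hw : 0 < w) (ha : 1 ≤ a) :
    1 ≤ max 1 w⁻¹ * (min w a⁻¹ * a) := by
  rcases min_choice w a⁻¹ with h | h <;> rw [h]
  · calc 1 ≤ w⁻¹ * (w * a) := by rw [inv_mul_cancel_left₀ hw.ne']; exact ha
      _ ≤ max 1 w⁻¹ * (w * a) := by gcongr; exact le_max_right _ _
  · rw [inv_mul_cancel₀ (by positivity)]
    simp

lemma integral_Ioi_stdGauss_le_mul_integral_Icc {a w : ℝ} (ha : 0 ≤ a) (hw : 0 < w) :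
    ∫ z in Ioi a, stdGauss z
      ≤ exp 1 * (√(π / 2) + 1) * max 1 w⁻¹ * ∫ z in Icc a (a + w), stdGauss z := by
  set δ := min w (1 + a)⁻¹
  have hδ : 0 ≤ δ := le_min hw.le (by positivity)
  have haδ : (1 + a) * δ ≤ 1 :=
    calc (1 + a) * δ ≤ (1 + a) * (1 + a)⁻¹ := by gcongr; exact min_le_right _ _
      _ = 1 := mul_inv_cancel₀ (by positivity)
  have hm : 1 ≤ max 1 w⁻¹ * (δ * (1 + a)) := one_le_max_one_inv_mul_min hw (by linarith)
  calc ∫ z in Ioi a, stdGauss z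
      ≤ (√(π / 2) + 1) * stdGauss a / (1 + a) := by
        rw [le_div_iff₀ (by positivity), mul_comm]
        exact one_add_mul_integral_Ioi_stdGauss_le ha
    _ ≤ (√(π / 2) + 1) * stdGauss a * (max 1 w⁻¹ * δ) := by
        rw [div_le_iff₀ (by positivity), mul_assoc, mul_assoc (max 1 w⁻¹)]
        exact le_mul_of_one_le_right (by have := stdGauss_pos a; positivity) hm
    _ = exp 1 * (√(π / 2) + 1) * max 1 w⁻¹ * (δ * (exp (-1) * stdGauss a)) := by
        rw [exp_neg]
        field_simp
    _ ≤ exp 1 * (√(π / 2) + 1) * max 1 w⁻¹ * ∫ z in Icc a (a + w), stdGauss z := by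
        gcongr
        refine (mul_stdGauss_le_integral_Icc ha hδ haδ).trans (setIntegral_stdGauss_mono ?_)
        exact (Icc_subset_Icc_right (by gcongr; exact min_le_left _ _)).eventuallyLE

/-- **Gaussian interval mass bound** (Lemma): there is a universal constant `C > 0` such
that for all `0 ≤ L ≤ U ≤ ∞` and `w > 0`, the Gaussian mass of `[L, U]` is at most
`C · max{1, 1/w}` times the mass of `{z ∈ [L, U] : z ≤ L + w}`. -/
theorem gaussian_initial_segment_bound :
    ∃ C : ℝ, 0 < C ∧ ∀ (L : ℝ) (U : EReal) (w : ℝ), 0 ≤ L → (L : EReal) ≤ U → 0 < w →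
      ∫ z in {z : ℝ | L ≤ z ∧ (z : EReal) ≤ U}, stdGauss z
        ≤ C * max 1 w⁻¹ *
          ∫ z in {z : ℝ | L ≤ z ∧ (z : EReal) ≤ U ∧ z ≤ L + w}, stdGauss z := by
  refine ⟨exp 1 * (√(π / 2) + 1), by positivity, fun L U w hL _ hw => ?_⟩
  by_cases hU : U ≤ ((L + w : ℝ) : EReal)
  · have hsame : {z : ℝ | L ≤ z ∧ (z : EReal) ≤ U ∧ z ≤ L + w}
        = {z : ℝ | L ≤ z ∧ (z : EReal) ≤ U} := by
      ext z
      simp only [mem_ofPred_eq, and_congr_right_iff, and_iff_left_iff_imp]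
      exact fun _ hz => EReal.coe_le_coe_iff.mp (hz.trans hU)
    have hC : 1 ≤ exp 1 * (√(π / 2) + 1) * max 1 w⁻¹ :=
      one_le_mul_of_one_le_of_one_le (one_le_mul_of_one_le_of_one_le (one_le_exp zero_le_one)
        (by linarith [sqrt_nonneg (π / 2)])) (le_max_left _ _)
    rw [hsame]
    exact le_mul_of_one_le_left (integral_nonneg fun z => (stdGauss_pos z).le) hC
  · have hsubIci : {z : ℝ | L ≤ z ∧ (z : EReal) ≤ U} ⊆ Ici L := fun z hz => hz.1
    have hsub : Icc L (L + w) ⊆ {z : ℝ | L ≤ z ∧ (z : EReal) ≤ U ∧ z ≤ L + w} :=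
      fun z ⟨hLz, hzw⟩ => ⟨hLz, (EReal.coe_le_coe_iff.mpr hzw).trans (not_le.mp hU).le, hzw⟩
    calc ∫ z in {z : ℝ | L ≤ z ∧ (z : EReal) ≤ U}, stdGauss z
        ≤ ∫ z in Ioi L, stdGauss z :=
          setIntegral_stdGauss_mono (hsubIci.eventuallyLE.trans Ioi_ae_eq_Ici.symm.le)
      _ ≤ exp 1 * (√(π / 2) + 1) * max 1 w⁻¹ * ∫ z in Icc L (L + w), stdGauss z :=
          integral_Ioi_stdGauss_le_mul_integral_Icc hL hw
      _ ≤ _ := mul_le_mul_of_nonneg_left (setIntegral_stdGauss_mono hsub.eventuallyLE)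
          (by positivity)
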